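/- Let π ≠ id be a permutation and let k be a positive integer with k ≥ d₂(π). Suppose σ = π t_{αβ} for some α ≤ k < β with ℓ(σ) = ℓ(π) + 1. Then d₁(σ) ≥ d₁(π). -/

import Mathlib

/-- A permutation of the positive integers, modeled as a permutation of `ℕ`
fixing `0` (and, separately assumed, all but finitely many points). -/
def FinPerm (w : Equiv.Perm ℕ) : Prop :=
  w 0 = 0 ∧ {i : ℕ | w i ≠ i}.Finite

/-- The length `ℓ(w)`: the number of inversions, i.e. pairs `i < j` with `w i > w j`. -/
noncomputable def len (w : Equiv.Perm ℕ) : ℕ :=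
  {p : ℕ × ℕ | p.1 < p.2 ∧ w p.2 < w p.1}.ncard

/-- The set of descents: positions `i ≥ 1` with `w i > w (i+1)`. -/
def descents (w : Equiv.Perm ℕ) : Set ℕ :=
  {i : ℕ | 0 < i ∧ w (i + 1) < w i}

/-- `d₁(w)`: the first (smallest) descent of `w`. -/
noncomputable def d1 (w : Equiv.Perm ℕ) : ℕ := sInf (descents w)

/-- `d₂(w)`: the last (largest) descent of `w`. -/
noncomputable def d2 (w : Equiv.Perm ℕ) : ℕ := sSup (descents w)

/-- `kCover k ρ π` means `ρ ⋖_k π`:  `π = ρ t_{a b}` for some positive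
`a ≤ k < b`, with `ℓ(π) = ℓ(ρ) + 1`. -/
def kCover (k : ℕ) (ρ π : Equiv.Perm ℕ) : Prop :=
  ∃ a b : ℕ, 0 < a ∧ a ≤ k ∧ k < b ∧ π = ρ * Equiv.swap a b ∧ len π = len ρ + 1

/-!
Since `ℓ(π t_{αβ}) = ℓ(π) + 1`, the swap is a covering move: `π α < π β`, and no `c` with
`α < c < β` has `π α < π c < π β`, since otherwise the inversions `(α, β)`, `(α, c)`, `(c, β)`
would all be created and the length would grow by at least three. For such a move, a descent
`i` of `σ` with `i + 1 < β` is already a descent of `π`. As `σ ≠ id` with `σ 0 = 0`, `d₁(σ)` is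
a descent of `σ`; if `d₁(σ) < d₁(π) ≤ d₂(π) ≤ k < β`, it would be a descent of `π` below `d₁(π)`.
-/

open Equiv

def inversions (w : Perm ℕ) : Set (ℕ × ℕ) := {p | p.1 < p.2 ∧ w p.2 < w p.1}

lemma len_eq_ncard_inversions (w : Perm ℕ) : len w = (inversions w).ncard := rfl

lemma inversions_one : inversions 1 = ∅ := by
  ext p
  simp only [inversions, Perm.one_apply, Set.mem_ofPred_eq, Set.mem_empty_iff_false, iff_false]
  omega

lemma len_one : len 1 = 0 := by
  rw [len_eq_ncard_inversions, inversions_one, Set.ncard_empty]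

lemma inversions_finite {w : Perm ℕ} (hw : {i | w i ≠ i}.Finite) : (inversions w).Finite := by
  obtain ⟨N, hN⟩ := hw.bddAbove
  have hfix : ∀ i, N < i → w i = i := fun i hi => by_contra fun h => (hN h).not_gt hi
  refine ((Set.finite_Iic N).prod (Set.finite_Iic N)).subset ?_
  rintro ⟨i, j⟩ ⟨hij, hji : w j < w i⟩
  have hj : j ≤ N := by
    by_contra! hj
    -- `w i > j > N` is fixed by `w`, so `w i = i < j`
    have hwi : w (w i) = w i := hfix _ (by rw [hfix j hj] at hji; omega)
    have := hfix j hj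
    rw [w.injective hwi] at hji
    omega
  exact ⟨by simp only [Set.mem_Iic]; omega, hj⟩

lemma setOf_mul_swap_apply_ne_subset (w : Perm ℕ) (a b : ℕ) :
    {i | (w * swap a b) i ≠ i} ⊆ {i | w i ≠ i} ∪ {a, b} := by
  intro i hi
  by_cases hab : i = a ∨ i = b
  · exact Or.inr hab
  · push Not at hab
    left
    simpa [swap_apply_of_ne_of_ne hab.1 hab.2] using hi

section Swap

variable (w : Perm ℕ) {a b : ℕ}

/-- An inversion `(i, j)` of `w` is sent to the inversion `(swap a b i, swap a b j)` of
`w * swap a b` when the swap keeps the two positions in order, and to itself otherwise; this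
is injective and misses the counted inversions. -/
lemma len_add_ncard_le_len_mul_swap (hab : a < b) (hw : w a < w b)
    (hfin : (inversions (w * swap a b)).Finite) :
    len w + {q ∈ inversions (w * swap a b) |
        q ∉ inversions w ∧ swap a b q.2 < swap a b q.1}.ncard ≤ len (w * swap a b) := by
  set s := swap a b
  let g : ℕ × ℕ → ℕ × ℕ := fun p => if s p.1 < s p.2 then (s p.1, s p.2) else p
  have hmaps : Set.MapsTo g (inversions w) (inversions (w * s)) := by
    rintro ⟨i, j⟩ ⟨hij, hji : w j < w i⟩
    by_cases h : s i < s j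
    · simpa [g, h, inversions, s, swap_apply_self] using hji
    · simp only [g, h, if_false]
      refine ⟨hij, show w (s j) < w (s i) from ?_⟩
      -- `(i, j)` is `(a, c)` or `(c, b)` with `a < c < b`; it is not `(a, b)` as `w a < w b`
      simp only [s, swap_apply_def] at h ⊢
      split_ifs at h ⊢ <;> subst_vars <;> omega
  have hinj : Set.InjOn g (inversions w) := by
    rintro ⟨i, j⟩ ⟨hij, -⟩ ⟨i', j'⟩ ⟨hij', -⟩ hg
    by_cases h : s i < s j <;> by_cases h' : s i' < s j' <;>
      simp only [g, h, h', if_true, if_false, Prod.mk.injEq] at hg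
    · rw [s.injective hg.1, s.injective hg.2]
    · rw [← hg.1, ← hg.2, swap_apply_self, swap_apply_self] at h'
      exact absurd hij h'
    · rw [hg.1, hg.2, swap_apply_self, swap_apply_self] at h
      exact absurd hij' h
    · rw [hg.1, hg.2]
  have hnew : {q ∈ inversions (w * s) | q ∉ inversions w ∧ s q.2 < s q.1} ⊆
      inversions (w * s) \ g '' inversions w := by
    rintro ⟨i, j⟩ ⟨hq, hqw, hs⟩
    refine ⟨hq, ?_⟩
    rintro ⟨⟨i', j'⟩, hp, hg⟩
    by_cases h : s i' < s j'
    · simp only [g, h, if_true, Prod.mk.injEq] at hg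
      rw [← hg.1, ← hg.2, swap_apply_self, swap_apply_self] at hs
      exact absurd hp.1 hs.not_gt
    · simp only [g, h, if_false] at hg
      exact hqw (hg ▸ hp)
  calc len w + _
      ≤ (g '' inversions w).ncard + (inversions (w * s) \ g '' inversions w).ncard := by
        rw [hinj.ncard_image]
        exact Nat.add_le_add_left (Set.ncard_le_ncard hnew hfin.sdiff) _
    _ = len (w * s) := by
        rw [add_comm, len_eq_ncard_inversions]
        exact Set.ncard_sdiff_add_ncard_of_subset hmaps.image_subset hfin

lemma len_lt_len_mul_swap (hab : a < b) (hw : w a < w b)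
    (hfin : (inversions (w * swap a b)).Finite) : len w < len (w * swap a b) := by
  have hmem : (a, b) ∈ {q ∈ inversions (w * swap a b) |
      q ∉ inversions w ∧ swap a b q.2 < swap a b q.1} := by
    simp [inversions, hab, hw, hw.le]
  have hpos := (Set.ncard_pos (hfin.subset (Set.sep_subset _ _))).mpr ⟨_, hmem⟩
  have := len_add_ncard_le_len_mul_swap w hab hw hfin
  omega

lemma len_add_three_le_len_mul_swap (hab : a < b) (hw : w a < w b)
    (hfin : (inversions (w * swap a b)).Finite) {c : ℕ} (hac : a < c) (hcb : c < b)
    (hwac : w a < w c) (hwcb : w c < w b) : len w + 3 ≤ len (w * swap a b) := by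
  have hsub : {(a, b), (a, c), (c, b)} ⊆ {q ∈ inversions (w * swap a b) |
      q ∉ inversions w ∧ swap a b q.2 < swap a b q.1} := by
    have hca : c ≠ a := hac.ne'
    have hcb' : c ≠ b := hcb.ne
    simp only [Set.insert_subset_iff, Set.singleton_subset_iff]
    refine ⟨?_, ?_, ?_⟩ <;>
      simp [inversions, swap_apply_of_ne_of_ne hca hcb', hab, hac, hcb, hw, hwac, hwcb,
        hw.le, hwac.le, hwcb.le]
  have hcard : ({(a, b), (a, c), (c, b)} : Set (ℕ × ℕ)).ncard = 3 :=
    Set.ncard_eq_three.mpr ⟨_, _, _, by simp; omega, by simp; omega, by simp; omega, rfl⟩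
  have := Set.ncard_le_ncard hsub (hfin.subset (Set.sep_subset _ _))
  have := len_add_ncard_le_len_mul_swap w hab hw hfin
  omega

lemma apply_lt_apply_of_len_mul_swap_eq_succ (hab : a < b) (hfin : (inversions w).Finite)
    (hlen : len (w * swap a b) = len w + 1) : w a < w b := by
  by_contra! h
  have hlt : (w * swap a b) a < (w * swap a b) b := by
    simpa using h.lt_of_ne (w.injective.ne hab.ne')
  have := len_lt_len_mul_swap (w * swap a b) hab hlt (by simpa [mul_assoc] using hfin)
  rw [mul_assoc, swap_mul_self, mul_one] at this
  omega

lemma not_between_of_len_mul_swap_eq_succ (hab : a < b) (hw : w a < w b)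
    (hfin : (inversions (w * swap a b)).Finite) (hlen : len (w * swap a b) = len w + 1)
    {c : ℕ} (hac : a < c) (hcb : c < b) : ¬ (w a < w c ∧ w c < w b) := fun hc => by
  have := len_add_three_le_len_mul_swap w hab hw hfin hac hcb hc.1 hc.2
  omega

lemma mem_descents_of_mem_descents_mul_swap (hw : w a < w b)
    (hgap : ∀ c, a < c → c < b → ¬ (w a < w c ∧ w c < w b))
    {i : ℕ} (hi : i ∈ descents (w * swap a b)) (hib : i + 1 < b) : i ∈ descents w := by
  obtain ⟨hi0, hdesc⟩ := hi
  refine ⟨hi0, ?_⟩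
  by_cases hia : i = a
  · subst hia
    have := hgap (i + 1) (by omega) hib
    have hne : w (i + 1) ≠ w i := w.injective.ne (by omega)
    rw [Perm.mul_apply, Perm.mul_apply, swap_apply_left,
      swap_apply_of_ne_of_ne (by omega) (by omega)] at hdesc
    omega
  · rw [Perm.mul_apply, Perm.mul_apply, swap_apply_of_ne_of_ne hia (by omega)] at hdesc
    by_cases hia' : i + 1 = a
    · rw [hia', swap_apply_left] at hdesc
      rw [hia']
      omega
    · rwa [swap_apply_of_ne_of_ne hia' (by omega)] at hdesc

end Swap

section Descents

variable {w : Perm ℕ}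

lemma eq_one_of_descents_eq_empty (h0 : w 0 = 0) (h : descents w = ∅) : w = 1 := by
  have hmono : StrictMono w := strictMono_nat_of_lt_succ fun n => by
    rcases n.eq_zero_or_pos with rfl | hn
    · rw [h0]
      exact Nat.pos_of_ne_zero fun h1 => one_ne_zero (w.injective (h1.trans h0.symm))
    · have : n ∉ descents w := h ▸ Set.notMem_empty n
      simp only [descents, Set.mem_ofPred_eq, not_and, not_lt] at this
      exact (this hn).lt_of_ne (w.injective.ne n.succ_ne_self.symm)
  ext n
  exact congrArg (· n)
    (Subsingleton.elim (hmono.orderIsoOfSurjective w w.surjective) (OrderIso.refl ℕ))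

lemma descents_nonempty (h0 : w 0 = 0) (hw : w ≠ 1) : (descents w).Nonempty :=
  Set.nonempty_iff_ne_empty.mpr fun h => hw (eq_one_of_descents_eq_empty h0 h)

lemma descents_finite (hfin : (inversions w).Finite) : (descents w).Finite :=
  (hfin.image Prod.fst).subset fun i hi => ⟨(i, i + 1), ⟨i.lt_succ_self, hi.2⟩, rfl⟩

lemma d1_le_d2 (hfin : (descents w).Finite) : d1 w ≤ d2 w := by
  rcases (descents w).eq_empty_or_nonempty with h | h
  · simp [d1, h]
  · exact Nat.sInf_le (Nat.sSup_mem h hfin.bddAbove)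

end Descents

theorem stmt5_general (π : Equiv.Perm ℕ) (hπ : FinPerm π)
    (k : ℕ) (hkd : d2 π ≤ k)
    (σ : Equiv.Perm ℕ) (α β : ℕ) (hα : 0 < α) (hαk : α ≤ k) (hkβ : k < β)
    (hσ : σ = π * Equiv.swap α β) (hlen : len σ = len π + 1) :
    d1 π ≤ d1 σ := by
  subst hσ
  have hαβ : α < β := hαk.trans_lt hkβ
  have hπfin : (inversions π).Finite := inversions_finite hπ.2
  have hσfin : (inversions (π * swap α β)).Finite := inversions_finite <|
    (hπ.2.union (Set.toFinite {α, β})).subset (setOf_mul_swap_apply_ne_subset π α β)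
  have hlt := apply_lt_apply_of_len_mul_swap_eq_succ π hαβ hπfin hlen
  have hgap c := not_between_of_len_mul_swap_eq_succ π hαβ hlt hσfin hlen (c := c)
  have hσ0 : (π * swap α β) 0 = 0 := by
    rw [Perm.mul_apply, swap_apply_of_ne_of_ne (by omega) (by omega), hπ.1]
  have hσ1 : π * swap α β ≠ 1 := fun h => by rw [h, len_one] at hlen; omega
  have hd1σ : d1 (π * swap α β) ∈ descents (π * swap α β) :=
    Nat.sInf_mem (descents_nonempty hσ0 hσ1)
  have hd12 := d1_le_d2 (descents_finite hπfin)
  by_contra! h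
  exact (Nat.sInf_le (mem_descents_of_mem_descents_mul_swap π hlt hgap hd1σ (by omega))).not_gt h

theorem stmt5 (π : Equiv.Perm ℕ) (hπ : FinPerm π) (hne : π ≠ 1)
    (k : ℕ) (hk : 0 < k) (hkd : d2 π ≤ k)
    (σ : Equiv.Perm ℕ) (α β : ℕ) (hα : 0 < α) (hαk : α ≤ k) (hkβ : k < β)
    (hσ : σ = π * Equiv.swap α β) (hlen : len σ = len π + 1) :
    d1 π ≤ d1 σ :=
  stmt5_general π hπ k hkd σ α β hα hαk hkβ hσ hlen
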